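/- arXiv:2408.06542 — 2 statements merged into one kernel-verified Lean document; each statement's English description precedes it below -/
import Mathlib

section
/- Let R_max = max_{(s,a)} |R(s,a)|. For every k ∈ ℕ, every belief b over S, and every a ∈ A, the closed-loop model advantage under the open-loop value function satisfies 0 ≤ ∑_{o' : P(o'|b,a)>0} P(o'|b,a)·V^{open}_k(τ(b,a,o')) − V^{open}_k(b_a) ≤ (R_max/(1−γ))·√(2·IG(b,a)). -/
/-- A belief over a finite set: nonnegative and sums to one. -/
def IsBelief {X : Type*} [Fintype X] (p : X → ℝ) : Prop :=
  (∀ x, 0 ≤ p x) ∧ ∑ x, p x = 1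

/-- KL divergence between two distributions on a finite set. -/
noncomputable def KL {X : Type*} [Fintype X] (p q : X → ℝ) : ℝ :=
  ∑ x, if 0 < p x then p x * Real.log (p x / q x) else 0

/-- Predicted (one-step open-loop) belief `b_a(s') = ∑_s P(s'|s,a) b(s)`. -/
noncomputable def predBelief {S A : Type*} [Fintype S]
    (T : S → A → S → ℝ) (b : S → ℝ) (a : A) (s' : S) : ℝ :=
  ∑ s, T s a s' * b s

/-- Observation predictive `P(o'|b,a) = ∑_{s'} P(o'|s') b_a(s')`. -/
noncomputable def obsPred {S O A : Type*} [Fintype S]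
    (T : S → A → S → ℝ) (L : S → O → ℝ) (b : S → ℝ) (a : A) (o : O) : ℝ :=
  ∑ s', L s' o * predBelief T b a s'

/-- Posterior `τ(b,a,o')(s') = P(o'|s') b_a(s') / P(o'|b,a)`. -/
noncomputable def postBelief {S O A : Type*} [Fintype S]
    (T : S → A → S → ℝ) (L : S → O → ℝ) (b : S → ℝ) (a : A) (o : O) (s' : S) : ℝ :=
  L s' o * predBelief T b a s' / obsPred T L b a o

/-- Information gain `IG(b,a)`. -/
noncomputable def IG {S O A : Type*} [Fintype S] [Fintype O]
    (T : S → A → S → ℝ) (L : S → O → ℝ) (b : S → ℝ) (a : A) : ℝ :=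
  ∑ o, if 0 < obsPred T L b a o then
    obsPred T L b a o * KL (postBelief T L b a o) (predBelief T b a) else 0

/-- Open-loop finite-horizon action value `Q^{open}_k(b,a)`. -/
noncomputable def Qopen {S A : Type*} [Fintype S] [Fintype A] [Nonempty A]
    (γ : ℝ) (T : S → A → S → ℝ) (R : S → A → ℝ) :
    ℕ → (S → ℝ) → A → ℝ
  | 0, b, a => ∑ s, b s * R s a
  | (k + 1), b, a =>
      (∑ s, b s * R s a) +
        γ * Finset.univ.sup' Finset.univ_nonempty (Qopen γ T R k (predBelief T b a))

/-- Open-loop finite-horizon value `V^{open}_k(b) = max_a Q^{open}_k(b,a)`. -/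
noncomputable def Vopen {S A : Type*} [Fintype S] [Fintype A] [Nonempty A]
    (γ : ℝ) (T : S → A → S → ℝ) (R : S → A → ℝ)
    (k : ℕ) (b : S → ℝ) : ℝ :=
  Finset.univ.sup' Finset.univ_nonempty (Qopen γ T R k b)

/-!
The posteriors `τ(b,a,o')`, weighted by `P(o'|b,a)`, average back to the prediction `b_a`,
and `V^{open}_k` is convex in the belief, so Jensen's inequality gives the lower bound.
For the upper bound, `V^{open}_k` is `R_max / (1 - γ)`-Lipschitz for the `ℓ¹` distance
(prediction is an `ℓ¹` contraction and the per-step errors form a geometric series),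
Pinsker's inequality bounds `‖τ(b,a,o') - b_a‖₁` by `√(2 KL(τ(b,a,o') ‖ b_a))`, and
concavity of `√` turns the `P(o'|b,a)`-average of these square roots into `√(2 IG(b,a))`.
-/

open Real InformationTheory

section Pinsker

open Set

lemma le_of_hasDerivAt_nonpos_nonneg {f f' : ℝ → ℝ} {a c t : ℝ}
    (hf : ∀ x ∈ Ioi a, HasDerivAt f (f' x) x)
    (hneg : ∀ x ∈ Ioo a c, f' x ≤ 0) (hpos : ∀ x ∈ Ioi c, 0 ≤ f' x)
    (hac : a < c) (ht : a < t) : f c ≤ f t := by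
  have hcont : ∀ D ⊆ Ioi a, ContinuousOn f D := fun D hD x hx =>
    (hf x (hD hx)).continuousAt.continuousWithinAt
  rcases le_total c t with hct | htc
  · refine monotoneOn_of_hasDerivWithinAt_nonneg (f' := f') (convex_Ici c)
      (hcont _ fun x hx => hac.trans_le hx) (fun x hx => ?_) (fun x hx => ?_)
      self_mem_Ici hct hct
    · rw [interior_Ici] at hx ⊢
      exact (hf x (hac.trans hx)).hasDerivWithinAt
    · exact hpos x (by simpa using hx)
  · refine antitoneOn_of_hasDerivWithinAt_nonpos (f' := f') (convex_Ioc a c)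
      (hcont _ fun x hx => hx.1) (fun x hx => ?_) (fun x hx => ?_)
      ⟨ht, htc⟩ ⟨hac, le_rfl⟩ htc
    · rw [interior_Ioc] at hx ⊢
      exact (hf x hx.1).hasDerivWithinAt
    · exact hneg x (by simpa using hx)

lemma monotoneOn_add_one_mul_log_sub :
    MonotoneOn (fun t => (t + 1) * log t - 2 * (t - 1)) (Ioi 0) := by
  refine monotoneOn_of_hasDerivWithinAt_nonneg (convex_Ioi 0)
    (f' := fun t => log t - 1 + t⁻¹) (fun x hx => ?_) (fun x hx => ?_) (fun x hx => ?_)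
  · exact ((continuousAt_id.add continuousAt_const).mul
      (continuousAt_log (ne_of_gt hx))).sub (by fun_prop) |>.continuousWithinAt
  · rw [interior_Ioi] at hx ⊢
    have h := (((hasDerivAt_id x).add_const 1).mul (hasDerivAt_log (ne_of_gt hx))).sub
      (((hasDerivAt_id x).sub_const 1).const_mul 2)
    refine (h.congr_deriv ?_).hasDerivWithinAt
    have : x ≠ 0 := ne_of_gt hx
    simp only [id]
    field_simp
    ring
  · rw [interior_Ioi] at hx
    linarith [one_sub_inv_le_log_of_pos (show (0:ℝ) < x from hx)]

lemma three_mul_sq_sub_one_le_klFun {t : ℝ} (ht : 0 ≤ t) :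
    3 * (t - 1) ^ 2 ≤ 2 * (t + 2) * klFun t := by
  rcases ht.eq_or_lt with rfl | ht
  · norm_num [klFun_zero]
  have hderiv : ∀ x ∈ Ioi (0:ℝ),
      HasDerivAt (fun t => 2 * (t + 2) * klFun t - 3 * (t - 1) ^ 2)
        (4 * ((x + 1) * log x - 2 * (x - 1))) x := by
    intro x hx
    have h := ((((hasDerivAt_id x).add_const 2).const_mul 2).mul
      (hasDerivAt_klFun (ne_of_gt hx))).sub ((((hasDerivAt_id x).sub_const 1).pow 2).const_mul 3)
    refine h.congr_deriv ?_
    simp only [klFun_apply, id]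
    ring
  have hmono := monotoneOn_add_one_mul_log_sub
  have h1 : (1:ℝ) ∈ Ioi 0 := mem_Ioi.2 one_pos
  have key := le_of_hasDerivAt_nonpos_nonneg hderiv
    (fun x hx => by
      have := hmono hx.1 h1 hx.2.le
      norm_num at this ⊢
      linarith)
    (fun x hx => by
      have := hmono h1 (mem_Ioi.2 (one_pos.trans hx)) (le_of_lt hx)
      norm_num at this ⊢
      linarith)
    one_pos ht
  norm_num [klFun_one] at key
  linarith

lemma mul_klFun_div_eq {x y : ℝ} (hxy : y = 0 → x = 0) :
    y * klFun (x / y) = x * log (x / y) - x + y := by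
  rcases eq_or_ne y 0 with rfl | hy
  · simp [hxy rfl]
  · rw [klFun_apply]
    field_simp
    ring

lemma three_mul_sq_sub_le_mul_klFun {x y : ℝ} (hx : 0 ≤ x) (hy : 0 ≤ y)
    (hxy : y = 0 → x = 0) :
    3 * (x - y) ^ 2 ≤ 2 * (x + 2 * y) * (y * klFun (x / y)) := by
  rcases hy.eq_or_lt with rfl | hy
  · simp [hxy rfl]
  have h := mul_le_mul_of_nonneg_left (three_mul_sq_sub_one_le_klFun (div_nonneg hx hy.le))
    (sq_nonneg y)
  have hsub : x - y = y * (x / y - 1) := by field_simp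
  have hadd : x + 2 * y = y * (x / y + 2) := by field_simp
  rw [hsub, hadd]
  linarith

end Pinsker

open Finset

section FiniteSums

variable {ι : Type*} [Fintype ι]

lemma sum_ite_pos_mul {w f : ι → ℝ} (hw : ∀ i, 0 ≤ w i) :
    ∑ i, (if 0 < w i then w i * f i else 0) = ∑ i, w i * f i := by
  refine sum_congr rfl fun i _ => ?_
  rcases (hw i).eq_or_lt with h | h
  · simp [← h]
  · rw [if_pos h]

lemma KL_eq_sum {p q : ι → ℝ} (hp : ∀ i, 0 ≤ p i) :
    KL p q = ∑ i, p i * log (p i / q i) :=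
  sum_ite_pos_mul hp

/-- Pinsker's inequality: Cauchy–Schwarz against the weights `(p + 2q) / 3`, which sum to `1`. -/
theorem sq_sum_abs_sub_le_two_mul_KL {p q : ι → ℝ} (hp : IsBelief p) (hq : IsBelief q)
    (hpq : ∀ i, q i = 0 → p i = 0) :
    (∑ i, |p i - q i|) ^ 2 ≤ 2 * KL p q := by
  have hcs := sum_sq_le_sum_mul_sum_of_sq_le_mul univ
    (r := fun i => |p i - q i|) (f := fun i => 2 * (q i * klFun (p i / q i)))
    (g := fun i => (p i + 2 * q i) / 3)
    (fun i _ => by have := klFun_nonneg (div_nonneg (hp.1 i) (hq.1 i)); nlinarith [hq.1 i])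
    (fun i _ => by linarith [hp.1 i, hq.1 i])
    (fun i _ => by
      have := three_mul_sq_sub_le_mul_klFun (hp.1 i) (hq.1 i) (hpq i)
      rw [sq_abs]
      linarith)
  have hf : ∑ i, 2 * (q i * klFun (p i / q i)) = 2 * KL p q := by
    simp only [mul_klFun_div_eq (hpq _), ← mul_sum, sum_add_distrib,
      sum_sub_distrib, hp.2, hq.2, KL_eq_sum hp.1]
    ring
  have hg : ∑ i, (p i + 2 * q i) / 3 = 1 := by
    rw [← sum_div, sum_add_distrib, ← mul_sum, hp.2, hq.2]
    norm_num
  simpa only [hf, hg, mul_one] using hcs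

lemma KL_nonneg {p q : ι → ℝ} (hp : IsBelief p) (hq : IsBelief q)
    (hpq : ∀ i, q i = 0 → p i = 0) : 0 ≤ KL p q := by
  nlinarith [sq_sum_abs_sub_le_two_mul_KL hp hq hpq, sq_nonneg (∑ i, |p i - q i|)]

lemma isBelief_sum_mul {X : Type*} [Fintype X] {K : X → ι → ℝ} {q : X → ℝ}
    (hK : ∀ x, IsBelief (K x)) (hq : IsBelief q) : IsBelief fun i => ∑ x, K x i * q x := by
  refine ⟨fun i => sum_nonneg fun x _ => mul_nonneg ((hK x).1 i) (hq.1 x), ?_⟩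
  rw [sum_comm]
  simp only [← sum_mul, (hK _).2, one_mul, hq.2]

lemma sum_abs_sum_mul_sub_le {X : Type*} [Fintype X] {K : X → ι → ℝ}
    (hK : ∀ x, IsBelief (K x)) (p q : X → ℝ) :
    ∑ i, |∑ x, K x i * p x - ∑ x, K x i * q x| ≤ ∑ x, |p x - q x| := calc
  _ ≤ ∑ i, ∑ x, K x i * |p x - q x| := sum_le_sum fun i _ => by
      rw [← sum_sub_distrib]
      refine (abs_sum_le_sum_abs _ _).trans_eq (sum_congr rfl fun x _ => ?_)
      rw [← mul_sub, abs_mul, abs_of_nonneg ((hK x).1 i)]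
  _ = ∑ x, |p x - q x| := by
      rw [sum_comm]
      simp only [← sum_mul, (hK _).2, one_mul]

lemma abs_sum_mul_sub_sum_mul_le {p q r : ι → ℝ} {M : ℝ} (hr : ∀ i, |r i| ≤ M) :
    |∑ i, p i * r i - ∑ i, q i * r i| ≤ M * ∑ i, |p i - q i| := by
  rw [← sum_sub_distrib, mul_sum]
  refine (abs_sum_le_sum_abs _ _).trans (sum_le_sum fun i _ => ?_)
  rw [← sub_mul, abs_mul, mul_comm]
  exact mul_le_mul_of_nonneg_right (hr i) (abs_nonneg _)

lemma sum_weighted_sum_mul {κ : Type*} [Fintype κ] (w : κ → ℝ) (μ : κ → ι → ℝ)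
    (r : ι → ℝ) :
    ∑ i, (∑ j, w j * μ j i) * r i = ∑ j, w j * ∑ i, μ j i * r i := by
  simp only [sum_mul, mul_sum]
  rw [sum_comm]
  exact sum_congr rfl fun _ _ => sum_congr rfl fun _ _ => by ring

variable [Nonempty ι]

lemma abs_sup'_sub_sup'_le {f g : ι → ℝ} {C : ℝ} (h : ∀ i, |f i - g i| ≤ C) :
    |univ.sup' univ_nonempty f - univ.sup' univ_nonempty g| ≤ C := by
  refine abs_sub_le_iff.2 ⟨?_, ?_⟩ <;> refine sub_le_iff_le_add.2 (sup'_le _ _ fun i _ => ?_)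
  · linarith [le_sup' g (mem_univ i), le_abs_self (f i - g i), h i]
  · linarith [le_sup' f (mem_univ i), neg_abs_le (f i - g i), h i]

lemma sup'_le_sum_mul_sup' {κ : Type*} [Fintype κ] {w : κ → ℝ} (hw : ∀ j, 0 ≤ w j)
    {g : ι → ℝ} {f : κ → ι → ℝ} (h : ∀ i, g i ≤ ∑ j, w j * f j i) :
    univ.sup' univ_nonempty g ≤ ∑ j, w j * univ.sup' univ_nonempty (f j) :=
  sup'_le _ _ fun i _ => (h i).trans <| sum_le_sum fun j _ =>
    mul_le_mul_of_nonneg_left (le_sup' (f j) (mem_univ i)) (hw j)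

end FiniteSums

section Belief

variable {S O A : Type*} [Fintype S]
  {T : S → A → S → ℝ} {L : S → O → ℝ} {b : S → ℝ} {a : A}

lemma isBelief_predBelief (hT : ∀ s, IsBelief (T s a)) (hb : IsBelief b) :
    IsBelief (predBelief T b a) :=
  isBelief_sum_mul hT hb

lemma isBelief_obsPred [Fintype O] (hL : ∀ s, IsBelief (L s)) (hq : IsBelief (predBelief T b a)) :
    IsBelief (obsPred T L b a) :=
  isBelief_sum_mul hL hq

lemma isBelief_postBelief {o : O} (hL : ∀ s, 0 ≤ L s o) (hq : ∀ s, 0 ≤ predBelief T b a s)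
    (ho : 0 < obsPred T L b a o) : IsBelief (postBelief T L b a o) :=
  ⟨fun s => div_nonneg (mul_nonneg (hL s) (hq s)) ho.le, by
    simp only [postBelief, ← sum_div]
    exact div_self ho.ne'⟩

lemma postBelief_eq_zero {o : O} {s : S} (h : predBelief T b a s = 0) :
    postBelief T L b a o s = 0 := by
  simp [postBelief, h]

lemma KL_postBelief_nonneg [Fintype O] (hL : ∀ s, IsBelief (L s))
    (hq : IsBelief (predBelief T b a)) (o : O) :
    0 ≤ KL (postBelief T L b a o) (predBelief T b a) := by
  rcases (isBelief_obsPred hL hq).1 o |>.eq_or_lt with h | h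
  · -- `x / 0 = 0`: the posterior of a null observation is the zero function
    simp [KL, postBelief, ← h]
  · exact KL_nonneg (isBelief_postBelief (fun s => (hL s).1 o) hq.1 h) hq
      fun _ => postBelief_eq_zero

lemma sum_obsPred_mul_postBelief [Fintype O] (hL : ∀ s, IsBelief (L s))
    (hq : ∀ s, 0 ≤ predBelief T b a s) (s : S) :
    ∑ o, obsPred T L b a o * postBelief T L b a o s = predBelief T b a s := by
  have h : ∀ o, obsPred T L b a o * postBelief T L b a o s = L s o * predBelief T b a s := by
    intro o
    rcases eq_or_ne (obsPred T L b a o) 0 with h | h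
    · rw [h, zero_mul, eq_comm]
      exact (sum_eq_zero_iff_of_nonneg fun s _ => mul_nonneg ((hL s).1 o) (hq s)).1 h s
        (mem_univ s)
    · exact mul_div_cancel₀ _ h
  simp only [h, ← sum_mul, (hL s).2, one_mul]

lemma predBelief_weighted_sum {ι : Type*} [Fintype ι] (w : ι → ℝ) (μ : ι → S → ℝ)
    (a : A) :
    predBelief T (fun s => ∑ i, w i * μ i s) a =
      fun s' => ∑ i, w i * predBelief T (μ i) a s' := by
  funext s'
  simp only [predBelief, mul_sum]
  rw [sum_comm]
  exact sum_congr rfl fun _ _ => sum_congr rfl fun _ _ => by ring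

lemma IG_eq_sum [Fintype O] (hw : ∀ o, 0 ≤ obsPred T L b a o) :
    IG T L b a = ∑ o, obsPred T L b a o * KL (postBelief T L b a o) (predBelief T b a) :=
  sum_ite_pos_mul hw

theorem sum_obsPred_mul_sqrt_KL_le [Fintype O] (hL : ∀ s, IsBelief (L s))
    (hq : IsBelief (predBelief T b a)) :
    ∑ o, obsPred T L b a o * √(2 * KL (postBelief T L b a o) (predBelief T b a))
      ≤ √(2 * IG T L b a) := by
  have hw := isBelief_obsPred hL hq
  have h := strictConcaveOn_sqrt.concaveOn.le_map_sum (fun o _ => hw.1 o) hw.2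
    fun o _ => Set.mem_Ici.2 (mul_nonneg zero_le_two (KL_postBelief_nonneg hL hq o))
  simpa only [smul_eq_mul, mul_left_comm _ (2 : ℝ), ← mul_sum, ← IG_eq_sum hw.1] using h

end Belief

section OpenLoop

variable {S A : Type*} [Fintype S] [Fintype A] [Nonempty A]
  {γ : ℝ} {T : S → A → S → ℝ} {R : S → A → ℝ}

lemma Qopen_succ (k : ℕ) (b : S → ℝ) (a : A) :
    Qopen γ T R (k + 1) b a = ∑ s, b s * R s a + γ * Vopen γ T R k (predBelief T b a) := rfl

theorem Qopen_weighted_sum_le (hγ : 0 ≤ γ) (k : ℕ) {ι : Type*} [Fintype ι] {w : ι → ℝ}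
    (hw : ∀ i, 0 ≤ w i) (μ : ι → S → ℝ) (a : A) :
    Qopen γ T R k (fun s => ∑ i, w i * μ i s) a ≤ ∑ i, w i * Qopen γ T R k (μ i) a := by
  induction k generalizing μ a with
  | zero => exact (sum_weighted_sum_mul w μ _).le
  | succ k ih =>
    have hV : Vopen γ T R k (predBelief T (fun s => ∑ i, w i * μ i s) a)
        ≤ ∑ i, w i * Vopen γ T R k (predBelief T (μ i) a) := by
      rw [predBelief_weighted_sum]
      exact sup'_le_sum_mul_sup' hw (ih _)
    calc Qopen γ T R (k + 1) (fun s => ∑ i, w i * μ i s) a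
        ≤ ∑ i, w i * ∑ s, μ i s * R s a +
            γ * ∑ i, w i * Vopen γ T R k (predBelief T (μ i) a) := by
          rw [Qopen_succ, sum_weighted_sum_mul]
          gcongr
      _ = ∑ i, w i * Qopen γ T R (k + 1) (μ i) a := by
          simp only [Qopen_succ, mul_add, sum_add_distrib, mul_sum, mul_left_comm γ]

theorem Vopen_weighted_sum_le (hγ : 0 ≤ γ) (k : ℕ) {ι : Type*} [Fintype ι] {w : ι → ℝ}
    (hw : ∀ i, 0 ≤ w i) (μ : ι → S → ℝ) :
    Vopen γ T R k (fun s => ∑ i, w i * μ i s) ≤ ∑ i, w i * Vopen γ T R k (μ i) :=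
  sup'_le_sum_mul_sup' hw (Qopen_weighted_sum_le hγ k hw μ)

theorem abs_Qopen_sub_le (hγ0 : 0 ≤ γ) (hγ1 : γ < 1) (hT : ∀ s a, IsBelief (T s a))
    {Rmax : ℝ} (hR : ∀ s a, |R s a| ≤ Rmax) (hRmax : 0 ≤ Rmax)
    (k : ℕ) (p q : S → ℝ) (a : A) :
    |Qopen γ T R k p a - Qopen γ T R k q a| ≤ Rmax / (1 - γ) * ∑ s, |p s - q s| := by
  have hC : Rmax + γ * (Rmax / (1 - γ)) = Rmax / (1 - γ) := by
    field_simp [(sub_pos.2 hγ1).ne']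
    ring
  set C := Rmax / (1 - γ)
  have hC0 : 0 ≤ C := div_nonneg hRmax (sub_pos.2 hγ1).le
  induction k generalizing p q a with
  | zero =>
    refine (abs_sum_mul_sub_sum_mul_le fun s => hR s a).trans
      (mul_le_mul_of_nonneg_right ?_ (sum_nonneg fun _ _ => abs_nonneg _))
    nlinarith [mul_nonneg hγ0 hC0]
  | succ k ih =>
    have hV : |Vopen γ T R k (predBelief T p a) - Vopen γ T R k (predBelief T q a)|
        ≤ C * ∑ s, |p s - q s| :=
      (abs_sup'_sub_sup'_le fun c => ih _ _ c).trans
        (mul_le_mul_of_nonneg_left (sum_abs_sum_mul_sub_le (fun s => hT s a) p q) hC0)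
    rw [Qopen_succ, Qopen_succ, add_sub_add_comm, ← mul_sub]
    calc _ ≤ Rmax * ∑ s, |p s - q s| + γ * (C * ∑ s, |p s - q s|) := by
          refine (abs_add_le _ _).trans (add_le_add (abs_sum_mul_sub_sum_mul_le fun s => hR s a) ?_)
          rw [abs_mul, abs_of_nonneg hγ0]
          exact mul_le_mul_of_nonneg_left hV hγ0
      _ = C * ∑ s, |p s - q s| := by linear_combination (∑ s, |p s - q s|) * hC

theorem abs_Vopen_sub_le (hγ0 : 0 ≤ γ) (hγ1 : γ < 1) (hT : ∀ s a, IsBelief (T s a))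
    {Rmax : ℝ} (hR : ∀ s a, |R s a| ≤ Rmax) (hRmax : 0 ≤ Rmax)
    (k : ℕ) (p q : S → ℝ) :
    |Vopen γ T R k p - Vopen γ T R k q| ≤ Rmax / (1 - γ) * ∑ s, |p s - q s| :=
  abs_sup'_sub_sup'_le (abs_Qopen_sub_le hγ0 hγ1 hT hR hRmax k p q)

theorem Vopen_sub_le_sqrt_KL (hγ0 : 0 ≤ γ) (hγ1 : γ < 1) (hT : ∀ s a, IsBelief (T s a))
    {Rmax : ℝ} (hR : ∀ s a, |R s a| ≤ Rmax) (hRmax : 0 ≤ Rmax)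
    (k : ℕ) {p q : S → ℝ} (hp : IsBelief p) (hq : IsBelief q)
    (hpq : ∀ s, q s = 0 → p s = 0) :
    Vopen γ T R k p - Vopen γ T R k q ≤ Rmax / (1 - γ) * √(2 * KL p q) :=
  (le_abs_self _).trans <| (abs_Vopen_sub_le hγ0 hγ1 hT hR hRmax k p q).trans <|
    mul_le_mul_of_nonneg_left (le_sqrt_of_sq_le (sq_sum_abs_sub_le_two_mul_KL hp hq hpq))
      (div_nonneg hRmax (sub_pos.2 hγ1).le)

end OpenLoop

section Advantage

variable {S O A : Type*} [Fintype S] [Fintype O] [Fintype A] [Nonempty A] {γ : ℝ}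
  {T : S → A → S → ℝ} {L : S → O → ℝ} {R : S → A → ℝ} {b : S → ℝ} {a : A}

theorem obsPred_mul_Vopen_postBelief_sub_le (hγ0 : 0 ≤ γ) (hγ1 : γ < 1)
    (hT : ∀ s a, IsBelief (T s a)) {Rmax : ℝ} (hR : ∀ s a, |R s a| ≤ Rmax)
    (hRmax : 0 ≤ Rmax) (hL : ∀ s, IsBelief (L s)) (hq : IsBelief (predBelief T b a))
    (k : ℕ) (o : O) :
    obsPred T L b a o * (Vopen γ T R k (postBelief T L b a o) - Vopen γ T R k (predBelief T b a))
      ≤ Rmax / (1 - γ) *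
        (obsPred T L b a o * √(2 * KL (postBelief T L b a o) (predBelief T b a))) := by
  rw [mul_left_comm]
  rcases ((isBelief_obsPred hL hq).1 o).eq_or_lt with h | h
  · simp [← h]
  · exact mul_le_mul_of_nonneg_left (Vopen_sub_le_sqrt_KL hγ0 hγ1 hT hR hRmax k
      (isBelief_postBelief (fun s => (hL s).1 o) hq.1 h) hq fun _ => postBelief_eq_zero) h.le

end Advantage

/-- Closed-loop model advantage under the open-loop value function is
non-negative and bounded by information gain (finite-horizon Proposition 4). -/
theorem closed_loop_model_advantage_bound
    {S O A : Type*} [Fintype S] [Fintype O] [Fintype A] [Nonempty S] [Nonempty A]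
    (γ : ℝ) (hγ0 : 0 < γ) (hγ1 : γ < 1)
    (T : S → A → S → ℝ) (hT : ∀ s a, IsBelief (T s a))
    (L : S → O → ℝ) (hL : ∀ s, IsBelief (L s))
    (R : S → A → ℝ)
    (Rmax : ℝ)
    (hRmax : Rmax = Finset.univ.sup' Finset.univ_nonempty
        (fun p : S × A => |R p.1 p.2|)) :
    ∀ (k : ℕ) (b : S → ℝ), IsBelief b → ∀ a : A,
      0 ≤ (∑ o, if 0 < obsPred T L b a o then
              obsPred T L b a o * Vopen γ T R k (postBelief T L b a o) else 0)
            - Vopen γ T R k (predBelief T b a) ∧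
      (∑ o, if 0 < obsPred T L b a o then
              obsPred T L b a o * Vopen γ T R k (postBelief T L b a o) else 0)
            - Vopen γ T R k (predBelief T b a)
        ≤ (Rmax / (1 - γ)) * Real.sqrt (2 * IG T L b a) := by
  intro k b hb a
  have hR : ∀ s a, |R s a| ≤ Rmax := fun s a =>
    hRmax ▸ le_sup' (fun p : S × A => |R p.1 p.2|) (mem_univ (s, a))
  have hRmax0 : 0 ≤ Rmax :=
    (abs_nonneg _).trans (hR (Classical.arbitrary S) (Classical.arbitrary A))
  have hq := isBelief_predBelief (fun s => hT s a) hb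
  have hw := isBelief_obsPred hL hq
  rw [sum_ite_pos_mul hw.1]
  constructor
  · rw [sub_nonneg, ← funext (sum_obsPred_mul_postBelief hL hq.1)]
    exact Vopen_weighted_sum_le hγ0.le k hw.1 _
  calc ∑ o, obsPred T L b a o * Vopen γ T R k (postBelief T L b a o)
        - Vopen γ T R k (predBelief T b a)
      = ∑ o, obsPred T L b a o *
          (Vopen γ T R k (postBelief T L b a o) - Vopen γ T R k (predBelief T b a)) := by
        simp only [mul_sub, sum_sub_distrib, ← sum_mul, hw.2, one_mul]
    _ ≤ Rmax / (1 - γ) *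
          ∑ o, obsPred T L b a o * √(2 * KL (postBelief T L b a o) (predBelief T b a)) := by
        rw [mul_sum]
        exact sum_le_sum fun o _ =>
          obsPred_mul_Vopen_postBelief_sub_le hγ0.le hγ1 hT hR hRmax0 hL hq k o
    _ ≤ Rmax / (1 - γ) * √(2 * IG T L b a) :=
        mul_le_mul_of_nonneg_left (sum_obsPred_mul_sqrt_KL_le hL hq)
          (div_nonneg hRmax0 (sub_nonneg.2 hγ1.le))
end

section
/- Let the following hold: (i) V^π is the value function of (π, R, P); V^{op} is the value function of (π^{open}, R, P^{open}) with advantage A^{op}; V^{EFE} is the value function of (π^{EFE}, R + IG, P^{open}) with advantage A^{EFE}; V^{π^{open}}_M and V^{π^{EFE}}_M are the value functions of (π^{open}, R, P) and (π^{EFE}, R, P) respectively; (ii) d^π, d^{op}, d^{EFE} are the normalized discounted occupancies of π, π^{open}, π^{EFE} in kernel P, each nonnegative; (iii) ε_{π̃} = ∑ d^π(x,a)·|A^{op}(x,a)| and ∑ d^π(x,a)·|A^{EFE}(x,a)| ≤ ε_{π̃}; (iv) d^{op}(x,a) ≤ C·d^π(x,a) and d^{EFE}(x,a) ≤ C·d^π(x,a)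 for all (x,a); (v) IG(x,a) ≥ 2 for all (x,a), and γ·R_max ≥ 2·(1−γ) where R_max = max |R|; (vi) for every (x,a) and for W ∈ {V^{op}, V^{EFE}}: 0 ≤ ∑_{x'} (P(x'|x,a) − P^{open}(x'|x,a))·W(x') ≤ (R_max/(1−γ))·√(2·IG(x,a)). Let ε_{IG} = ∑_{(x,a)} d^π(x,a)·IG(x,a). Then J_{P,R}(π) − J_{P,R}(π^{open}) ≤ ε_{π̃}/(1−γ) + ((C+1)·γ·R_max/(1−γ)²)·ε_{IG}, and J_{P,R}(π) − J_{P,R}(π^{EFE}) ≤ ε_{π̃}/(1−γ) + ((C+1)·γ·R_max/(1−γ)²)·ε_{IG} − ((C+1)/(1−γ))·ε_{IG}. -/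
section ValueAndOccupancy

variable {X A : Type*} [Fintype X] [Fintype A]

def IsValueFunction (γ : ℝ) (K : X → A → X → ℝ) (ρ r : X → A → ℝ) (V : X → ℝ) : Prop :=
  ∀ x, V x = ∑ a, ρ x a * (r x a + γ * ∑ x', K x a x' * V x')

def IsOccupancy (γ : ℝ) (μ : X → ℝ) (K : X → A → X → ℝ) (ρ d : X → A → ℝ) : Prop :=
  ∀ x a, d x a = (1 - γ) * μ x * ρ x a + γ * ρ x a * ∑ p : X × A, K p.1 p.2 x * d p.1 p.2

variable {γ : ℝ} {μ : X → ℝ} {K : X → A → X → ℝ} {ρ d : X → A → ℝ}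

namespace IsOccupancy

theorem sum_mul_eq (hd : IsOccupancy γ μ K ρ d) (x : X) (f : A → ℝ) :
    ∑ a, d x a * f a
      = ((1 - γ) * μ x + γ * ∑ p : X × A, K p.1 p.2 x * d p.1 p.2) * ∑ a, ρ x a * f a := by
  rw [Finset.mul_sum]
  exact Finset.sum_congr rfl fun a _ => by rw [hd x a]; ring

theorem sum_eq (hd : IsOccupancy γ μ K ρ d) (hρ : ∀ x, ∑ a, ρ x a = 1) (x : X) :
    ∑ a, d x a = (1 - γ) * μ x + γ * ∑ p : X × A, K p.1 p.2 x * d p.1 p.2 := by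
  simpa [hρ x] using hd.sum_mul_eq x fun _ => 1

theorem sum_mul_sub_average_eq_zero (hd : IsOccupancy γ μ K ρ d)
    (hρ : ∀ x, ∑ a, ρ x a = 1) {Q : X → A → ℝ} {W : X → ℝ}
    (hW : ∀ x, W x = ∑ a, ρ x a * Q x a) :
    ∑ p : X × A, d p.1 p.2 * (Q p.1 p.2 - W p.1) = 0 := by
  have hx : ∀ x, ∑ a, ρ x a * (Q x a - W x) = 0 := fun x => by
    simp only [mul_sub, Finset.sum_sub_distrib, ← Finset.sum_mul, hρ x, ← hW, one_mul, sub_self]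
  simp [Fintype.sum_prod_type, hd.sum_mul_eq, hx]

theorem sum_mul_sub_discounted_eq (hd : IsOccupancy γ μ K ρ d)
    (hρ : ∀ x, ∑ a, ρ x a = 1) (W : X → ℝ) :
    ∑ p : X × A, d p.1 p.2 * (W p.1 - γ * ∑ x', K p.1 p.2 x' * W x')
      = (1 - γ) * ∑ x, μ x * W x := by
  have hvisits : ∑ p : X × A, d p.1 p.2 * W p.1
      = ∑ x, ((1 - γ) * μ x + γ * ∑ p : X × A, K p.1 p.2 x * d p.1 p.2) * W x := by
    simp only [Fintype.sum_prod_type, ← Finset.sum_mul, hd.sum_eq hρ]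
  have hnext : ∑ p : X × A, d p.1 p.2 * ∑ x', K p.1 p.2 x' * W x'
      = ∑ x, (∑ p : X × A, K p.1 p.2 x * d p.1 p.2) * W x := by
    simp only [Finset.mul_sum, Finset.sum_mul]
    rw [Finset.sum_comm]
    exact Finset.sum_congr rfl fun x _ => Finset.sum_congr rfl fun p _ => by ring
  have hsplit : ∑ p : X × A, d p.1 p.2 * (W p.1 - γ * ∑ x', K p.1 p.2 x' * W x')
      = ∑ p : X × A, d p.1 p.2 * W p.1 - γ * ∑ p : X × A, d p.1 p.2 * ∑ x', K p.1 p.2 x' * W x' := by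
    rw [Finset.mul_sum, ← Finset.sum_sub_distrib]
    exact Finset.sum_congr rfl fun p _ => by ring
  rw [hsplit, hvisits, hnext, Finset.mul_sum, Finset.mul_sum, ← Finset.sum_sub_distrib]
  exact Finset.sum_congr rfl fun x _ => by ring

end IsOccupancy

theorem IsValueFunction.performance_difference {r : X → A → ℝ} {V : X → ℝ}
    (hV : IsValueFunction γ K ρ r V) (hd : IsOccupancy γ μ K ρ d) (hρ : ∀ x, ∑ a, ρ x a = 1)
    (W : X → ℝ) :
    (1 - γ) * (∑ x, μ x * V x - ∑ x, μ x * W x)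
      = ∑ p : X × A, d p.1 p.2 * (r p.1 p.2 + γ * ∑ x', K p.1 p.2 x' * W x' - W p.1) := by
  have hV0 := hd.sum_mul_sub_average_eq_zero hρ hV
  rw [mul_sub, ← hd.sum_mul_sub_discounted_eq hρ V, ← hd.sum_mul_sub_discounted_eq hρ W]
  calc _ = ∑ p : X × A, (d p.1 p.2 * (r p.1 p.2 + γ * ∑ x', K p.1 p.2 x' * W x' - W p.1)
          - d p.1 p.2 * (r p.1 p.2 + γ * ∑ x', K p.1 p.2 x' * V x' - V p.1)) := by
        rw [← Finset.sum_sub_distrib]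
        exact Finset.sum_congr rfl fun p _ => by ring
    _ = _ := by rw [Finset.sum_sub_distrib, hV0, sub_zero]

theorem performance_gap_eq {K' : X → A → X → ℝ} {π r r' dπ : X → A → ℝ} {Vπ Vρ W : X → ℝ}
    (hπ : ∀ x, ∑ a, π x a = 1) (hρ : ∀ x, ∑ a, ρ x a = 1)
    (hVπ : IsValueFunction γ K π r Vπ) (hVρ : IsValueFunction γ K ρ r Vρ)
    (hW : IsValueFunction γ K' ρ r' W)
    (hdπ : IsOccupancy γ μ K π dπ) (hd : IsOccupancy γ μ K ρ d) :
    (1 - γ) * (∑ x, μ x * Vπ x - ∑ x, μ x * Vρ x)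
      = ∑ p : X × A, dπ p.1 p.2 * (r' p.1 p.2 + γ * ∑ x', K' p.1 p.2 x' * W x' - W p.1)
        + γ * (∑ p : X × A, dπ p.1 p.2 * ∑ x', (K p.1 p.2 x' - K' p.1 p.2 x') * W x'
          - ∑ p : X × A, d p.1 p.2 * ∑ x', (K p.1 p.2 x' - K' p.1 p.2 x') * W x')
        + ∑ p : X × A, (d p.1 p.2 - dπ p.1 p.2) * (r' p.1 p.2 - r p.1 p.2) := by
  have hsplit : ∀ w : X → A → ℝ,
      ∑ p : X × A, w p.1 p.2 * (r p.1 p.2 + γ * ∑ x', K p.1 p.2 x' * W x' - W p.1)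
        = ∑ p : X × A, w p.1 p.2 * (r' p.1 p.2 + γ * ∑ x', K' p.1 p.2 x' * W x' - W p.1)
          + γ * ∑ p : X × A, w p.1 p.2 * ∑ x', (K p.1 p.2 x' - K' p.1 p.2 x') * W x'
          - ∑ p : X × A, w p.1 p.2 * (r' p.1 p.2 - r p.1 p.2) := by
    intro w
    rw [Finset.mul_sum, ← Finset.sum_add_distrib, ← Finset.sum_sub_distrib]
    refine Finset.sum_congr rfl fun p _ => ?_
    simp only [sub_mul, Finset.sum_sub_distrib]
    ring
  rw [show ∑ x, μ x * Vπ x - ∑ x, μ x * Vρ x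
      = (∑ x, μ x * Vπ x - ∑ x, μ x * W x) - (∑ x, μ x * Vρ x - ∑ x, μ x * W x) by ring,
    mul_sub, hVπ.performance_difference hdπ hπ, hVρ.performance_difference hd hρ, hsplit, hsplit,
    hd.sum_mul_sub_average_eq_zero hρ hW]
  simp only [sub_mul, Finset.sum_sub_distrib]
  ring

theorem performance_gap_le {K' : X → A → X → ℝ} {π r r' dπ b : X → A → ℝ} {Vπ Vρ W : X → ℝ}
    (hγ : 0 ≤ γ) (hπ : ∀ x, ∑ a, π x a = 1) (hρ : ∀ x, ∑ a, ρ x a = 1)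
    (hVπ : IsValueFunction γ K π r Vπ) (hVρ : IsValueFunction γ K ρ r Vρ)
    (hW : IsValueFunction γ K' ρ r' W)
    (hdπ : IsOccupancy γ μ K π dπ) (hd : IsOccupancy γ μ K ρ d)
    (hdπ0 : ∀ x a, 0 ≤ dπ x a) (hd0 : ∀ x a, 0 ≤ d x a)
    (hΔ : ∀ x a, 0 ≤ ∑ x', (K x a x' - K' x a x') * W x' ∧
      ∑ x', (K x a x' - K' x a x') * W x' ≤ b x a) :
    (1 - γ) * (∑ x, μ x * Vπ x - ∑ x, μ x * Vρ x)
      ≤ ∑ p : X × A, dπ p.1 p.2 * |r' p.1 p.2 + γ * ∑ x', K' p.1 p.2 x' * W x' - W p.1|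
        + γ * ∑ p : X × A, dπ p.1 p.2 * b p.1 p.2
        + ∑ p : X × A, (d p.1 p.2 - dπ p.1 p.2) * (r' p.1 p.2 - r p.1 p.2) := by
  rw [performance_gap_eq hπ hρ hVπ hVρ hW hdπ hd]
  gcongr ?_ + γ * ?_ + _
  · exact Finset.sum_le_sum fun p _ => mul_le_mul_of_nonneg_left (le_abs_self _) (hdπ0 p.1 p.2)
  exact (sub_le_self _ (Finset.sum_nonneg fun p _ => mul_nonneg (hd0 p.1 p.2) (hΔ p.1 p.2).1)).trans
    (Finset.sum_le_sum fun p _ => mul_le_mul_of_nonneg_left (hΔ p.1 p.2).2 (hdπ0 p.1 p.2))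

end ValueAndOccupancy

theorem sum_mul_le_mul_sum_mul {ι : Type*} [Fintype ι] {d d' g : ι → ℝ} {C : ℝ}
    (hd : ∀ i, d' i ≤ C * d i) (hg : ∀ i, 0 ≤ g i) :
    ∑ i, d' i * g i ≤ C * ∑ i, d i * g i := by
  rw [Finset.mul_sum]
  exact Finset.sum_le_sum fun i _ => by nlinarith [hd i, hg i]

theorem sqrt_two_mul_le_self {t : ℝ} (ht : 2 ≤ t) : √(2 * t) ≤ t := by
  rw [Real.sqrt_le_left (by linarith)]
  nlinarith

theorem sum_mul_const_mul_sqrt_le {ι : Type*} [Fintype ι] {d g : ι → ℝ} {c : ℝ}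
    (hc : 0 ≤ c) (hd : ∀ i, 0 ≤ d i) (hg : ∀ i, 2 ≤ g i) :
    ∑ i, d i * (c * √(2 * g i)) ≤ c * ∑ i, d i * g i := by
  rw [Finset.mul_sum]
  refine Finset.sum_le_sum fun i _ => ?_
  rw [mul_left_comm]
  exact mul_le_mul_of_nonneg_left
    (mul_le_mul_of_nonneg_left (sqrt_two_mul_le_self (hg i)) (hd i)) hc

theorem open_loop_and_efe_performance_gaps_general
    {X A : Type*} [Fintype X] [Fintype A]
    (γ : ℝ) (hγ0 : 0 < γ) (hγ1 : γ < 1)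
    (μ : X → ℝ)
    (P Popen : X → A → X → ℝ)
    (R : X → A → ℝ) (IG : X → A → ℝ)
    (π πop πefe : X → A → ℝ)
    (hπ : ∀ x, IsBelief (π x)) (hπop : ∀ x, IsBelief (πop x))
    (hπefe : ∀ x, IsBelief (πefe x))
    -- (i) value functions
    (Vπ Vop Vefe VopM VefeM : X → ℝ)
    (hVπ : ∀ x, Vπ x = ∑ a, π x a * (R x a + γ * ∑ x', P x a x' * Vπ x'))
    (hVop : ∀ x, Vop x = ∑ a, πop x a * (R x a + γ * ∑ x', Popen x a x' * Vop x'))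
    (hVefe : ∀ x, Vefe x =
      ∑ a, πefe x a * ((R x a + IG x a) + γ * ∑ x', Popen x a x' * Vefe x'))
    (hVopM : ∀ x, VopM x = ∑ a, πop x a * (R x a + γ * ∑ x', P x a x' * VopM x'))
    (hVefeM : ∀ x, VefeM x = ∑ a, πefe x a * (R x a + γ * ∑ x', P x a x' * VefeM x'))
    -- (ii) normalized discounted occupancies in kernel P, nonnegative
    (dπ dop defe : X → A → ℝ)
    (hdπ : ∀ x a, dπ x a = (1 - γ) * μ x * π x a
        + γ * π x a * ∑ p : X × A, P p.1 p.2 x * dπ p.1 p.2)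
    (hdop : ∀ x a, dop x a = (1 - γ) * μ x * πop x a
        + γ * πop x a * ∑ p : X × A, P p.1 p.2 x * dop p.1 p.2)
    (hdefe : ∀ x a, defe x a = (1 - γ) * μ x * πefe x a
        + γ * πefe x a * ∑ p : X × A, P p.1 p.2 x * defe p.1 p.2)
    (hdπ_nonneg : ∀ x a, 0 ≤ dπ x a) (hdop_nonneg : ∀ x a, 0 ≤ dop x a)
    (hdefe_nonneg : ∀ x a, 0 ≤ defe x a)
    -- (iii) policy advantage errors
    (εtilde : ℝ)
    (hεtilde : εtilde = ∑ p : X × A, dπ p.1 p.2 *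
        |(R p.1 p.2 + γ * ∑ x', Popen p.1 p.2 x' * Vop x') - Vop p.1|)
    (hεefe : (∑ p : X × A, dπ p.1 p.2 *
        |((R p.1 p.2 + IG p.1 p.2) + γ * ∑ x', Popen p.1 p.2 x' * Vefe x') - Vefe p.1|)
        ≤ εtilde)
    -- (iv) bounded density ratios
    (C : ℝ) (hCop : ∀ x a, dop x a ≤ C * dπ x a)
    (hCefe : ∀ x a, defe x a ≤ C * dπ x a)
    -- (v) information gain and reward magnitude assumptions
    (hIG2 : ∀ x a, 2 ≤ IG x a)
    (Rmax : ℝ)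
    (hγRmax : 2 * (1 - γ) ≤ γ * Rmax)
    -- (vi) closed-loop model advantage bounds for both value functions
    (hadvop : ∀ x a,
      0 ≤ ∑ x', (P x a x' - Popen x a x') * Vop x' ∧
      (∑ x', (P x a x' - Popen x a x') * Vop x')
        ≤ (Rmax / (1 - γ)) * Real.sqrt (2 * IG x a))
    (hadvefe : ∀ x a,
      0 ≤ ∑ x', (P x a x' - Popen x a x') * Vefe x' ∧
      (∑ x', (P x a x' - Popen x a x') * Vefe x')
        ≤ (Rmax / (1 - γ)) * Real.sqrt (2 * IG x a))
    -- expected information gain under the Bayes optimal occupancy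
    (εIG : ℝ) (hεIG : εIG = ∑ p : X × A, dπ p.1 p.2 * IG p.1 p.2) :
    ((∑ x, μ x * Vπ x) - (∑ x, μ x * VopM x)
      ≤ εtilde / (1 - γ) + ((C + 1) * γ * Rmax / (1 - γ) ^ 2) * εIG)
    ∧ ((∑ x, μ x * Vπ x) - (∑ x, μ x * VefeM x)
      ≤ εtilde / (1 - γ) + ((C + 1) * γ * Rmax / (1 - γ) ^ 2) * εIG
        - ((C + 1) / (1 - γ)) * εIG) := by
  have h1γ : 0 < 1 - γ := by linarith
  have hIG0 : ∀ x a, 0 ≤ IG x a := fun x a => by linarith [hIG2 x a]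
  have hmodel : γ * ∑ p : X × A, dπ p.1 p.2 * (Rmax / (1 - γ) * √(2 * IG p.1 p.2))
      ≤ γ * Rmax / (1 - γ) * εIG := by
    rw [mul_div_assoc, mul_assoc, hεIG]
    exact mul_le_mul_of_nonneg_left (sum_mul_const_mul_sqrt_le (div_nonneg (by nlinarith) h1γ.le)
      (fun p => hdπ_nonneg p.1 p.2) (fun p => hIG2 p.1 p.2)) hγ0.le
  have hCεIG : 0 ≤ C * εIG := hεIG ▸
    (Finset.sum_nonneg fun p _ => mul_nonneg (hdop_nonneg p.1 p.2) (hIG0 p.1 p.2)).trans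
      (sum_mul_le_mul_sum_mul (fun p => hCop p.1 p.2) (fun p => hIG0 p.1 p.2))
  have hefeIG : ∑ p : X × A, defe p.1 p.2 * IG p.1 p.2 ≤ C * εIG :=
    hεIG ▸ sum_mul_le_mul_sum_mul (fun p => hCefe p.1 p.2) (fun p => hIG0 p.1 p.2)
  -- γ R_max / (1 - γ) ≥ 2 is what lets the EFE bound absorb ∑ d^{EFE} IG ≤ C ε_IG.
  have hratio : 0 ≤ (γ * Rmax / (1 - γ) - 2) * (C * εIG) :=
    mul_nonneg (by rw [sub_nonneg, le_div_iff₀ h1γ]; linarith) hCεIG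
  have hop := performance_gap_le hγ0.le (fun x => (hπ x).2) (fun x => (hπop x).2) hVπ hVopM hVop
    hdπ hdop hdπ_nonneg hdop_nonneg hadvop
  have hefe := performance_gap_le (r' := fun x a => R x a + IG x a) hγ0.le (fun x => (hπ x).2)
    (fun x => (hπefe x).2) hVπ hVefeM hVefe hdπ hdefe hdπ_nonneg hdefe_nonneg hadvefe
  simp only [sub_self, mul_zero, Finset.sum_const_zero, add_zero, ← hεtilde] at hop
  simp only [add_sub_cancel_left, sub_mul, Finset.sum_sub_distrib, ← hεIG] at hefe
  constructor
  · rw [show εtilde / (1 - γ) + (C + 1) * γ * Rmax / (1 - γ) ^ 2 * εIG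
        = (εtilde + γ * Rmax / (1 - γ) * εIG + γ * Rmax / (1 - γ) * (C * εIG)) / (1 - γ) by
          field_simp; ring, le_div_iff₀ h1γ]
    linarith
  · rw [show εtilde / (1 - γ) + (C + 1) * γ * Rmax / (1 - γ) ^ 2 * εIG - (C + 1) / (1 - γ) * εIG
        = (εtilde + γ * Rmax / (1 - γ) * εIG + γ * Rmax / (1 - γ) * (C * εIG) - (C + 1) * εIG)
          / (1 - γ) by field_simp; ring, le_div_iff₀ h1γ]
    linarith

/-- Theorem 1 of the paper (abstract belief-state form): regret bounds for the
open-loop and EFE policies against the Bayes optimal policy. -/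
theorem open_loop_and_efe_performance_gaps
    {X A : Type*} [Fintype X] [Fintype A] [Nonempty X] [Nonempty A]
    (γ : ℝ) (hγ0 : 0 < γ) (hγ1 : γ < 1)
    (μ : X → ℝ) (hμ : IsBelief μ)
    (P Popen : X → A → X → ℝ)
    (hP : ∀ x a, IsBelief (P x a)) (hPopen : ∀ x a, IsBelief (Popen x a))
    (R : X → A → ℝ) (IG : X → A → ℝ)
    (π πop πefe : X → A → ℝ)
    (hπ : ∀ x, IsBelief (π x)) (hπop : ∀ x, IsBelief (πop x))
    (hπefe : ∀ x, IsBelief (πefe x))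
    -- (i) value functions
    (Vπ Vop Vefe VopM VefeM : X → ℝ)
    (hVπ : ∀ x, Vπ x = ∑ a, π x a * (R x a + γ * ∑ x', P x a x' * Vπ x'))
    (hVop : ∀ x, Vop x = ∑ a, πop x a * (R x a + γ * ∑ x', Popen x a x' * Vop x'))
    (hVefe : ∀ x, Vefe x =
      ∑ a, πefe x a * ((R x a + IG x a) + γ * ∑ x', Popen x a x' * Vefe x'))
    (hVopM : ∀ x, VopM x = ∑ a, πop x a * (R x a + γ * ∑ x', P x a x' * VopM x'))
    (hVefeM : ∀ x, VefeM x = ∑ a, πefe x a * (R x a + γ * ∑ x', P x a x' * VefeM x'))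
    -- (ii) normalized discounted occupancies in kernel P, nonnegative
    (dπ dop defe : X → A → ℝ)
    (hdπ : ∀ x a, dπ x a = (1 - γ) * μ x * π x a
        + γ * π x a * ∑ p : X × A, P p.1 p.2 x * dπ p.1 p.2)
    (hdop : ∀ x a, dop x a = (1 - γ) * μ x * πop x a
        + γ * πop x a * ∑ p : X × A, P p.1 p.2 x * dop p.1 p.2)
    (hdefe : ∀ x a, defe x a = (1 - γ) * μ x * πefe x a
        + γ * πefe x a * ∑ p : X × A, P p.1 p.2 x * defe p.1 p.2)
    (hdπ_nonneg : ∀ x a, 0 ≤ dπ x a) (hdop_nonneg : ∀ x a, 0 ≤ dop x a)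
    (hdefe_nonneg : ∀ x a, 0 ≤ defe x a)
    -- (iii) policy advantage errors
    (εtilde : ℝ)
    (hεtilde : εtilde = ∑ p : X × A, dπ p.1 p.2 *
        |(R p.1 p.2 + γ * ∑ x', Popen p.1 p.2 x' * Vop x') - Vop p.1|)
    (hεefe : (∑ p : X × A, dπ p.1 p.2 *
        |((R p.1 p.2 + IG p.1 p.2) + γ * ∑ x', Popen p.1 p.2 x' * Vefe x') - Vefe p.1|)
        ≤ εtilde)
    -- (iv) bounded density ratios
    (C : ℝ) (hCop : ∀ x a, dop x a ≤ C * dπ x a)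
    (hCefe : ∀ x a, defe x a ≤ C * dπ x a)
    -- (v) information gain and reward magnitude assumptions
    (hIG2 : ∀ x a, 2 ≤ IG x a)
    (Rmax : ℝ)
    (hRmax : Rmax = Finset.univ.sup' Finset.univ_nonempty
        (fun p : X × A => |R p.1 p.2|))
    (hγRmax : 2 * (1 - γ) ≤ γ * Rmax)
    -- (vi) closed-loop model advantage bounds for both value functions
    (hadvop : ∀ x a,
      0 ≤ ∑ x', (P x a x' - Popen x a x') * Vop x' ∧
      (∑ x', (P x a x' - Popen x a x') * Vop x')
        ≤ (Rmax / (1 - γ)) * Real.sqrt (2 * IG x a))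
    (hadvefe : ∀ x a,
      0 ≤ ∑ x', (P x a x' - Popen x a x') * Vefe x' ∧
      (∑ x', (P x a x' - Popen x a x') * Vefe x')
        ≤ (Rmax / (1 - γ)) * Real.sqrt (2 * IG x a))
    -- expected information gain under the Bayes optimal occupancy
    (εIG : ℝ) (hεIG : εIG = ∑ p : X × A, dπ p.1 p.2 * IG p.1 p.2) :
    ((∑ x, μ x * Vπ x) - (∑ x, μ x * VopM x)
      ≤ εtilde / (1 - γ) + ((C + 1) * γ * Rmax / (1 - γ) ^ 2) * εIG)
    ∧ ((∑ x, μ x * Vπ x) - (∑ x, μ x * VefeM x)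
      ≤ εtilde / (1 - γ) + ((C + 1) * γ * Rmax / (1 - γ) ^ 2) * εIG
        - ((C + 1) / (1 - γ)) * εIG) :=
  open_loop_and_efe_performance_gaps_general γ hγ0 hγ1 μ P Popen R IG π πop πefe hπ hπop hπefe Vπ
    Vop Vefe VopM VefeM hVπ hVop hVefe hVopM hVefeM dπ dop defe hdπ hdop hdefe hdπ_nonneg
    hdop_nonneg hdefe_nonneg εtilde hεtilde hεefe C hCop hCefe hIG2 Rmax hγRmax hadvop hadvefe εIG
    hεIG
end
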